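/- Let f ∈ L²(ℝ) and define the middle-frequency LTFT atom f_{0,b,c} with Fourier transform F f_{0,b,c}(ω) = √(γ/b) Ff((γ/b)(ω − (ξc/γ+1)b)). Then for every ω, ∫₀¹ ∫_{b₀}^{b₁} |F f_{0,b,c}(ω)|² db dc = ∫_{γω/b₁}^{γω/b₀} (1/q) P₁(q) dq, where P₁(q) = (γ/ξ) ∫₀^ξ |Ff(q − z − γ)|² dz. -/
import Mathlib


open MeasureTheory Real Complex intervalIntegral
open scoped FourierTransform

/-- Middle-frequency part of the LTFT frame-operator multiplier: for `ω > 0`,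
`∫₀¹ ∫_{b₀}^{b₁} |F f_{0,b,c}(ω)|² db dc = ∫_{γω/b₁}^{γω/b₀} (1/q) P₁(q) dq`,
where `F f_{0,b,c}(ω) = √(γ/b) Ff((γ/b)(ω - (ξc/γ+1)b))` and
`P₁(q) = (γ/ξ) ∫₀^ξ |Ff(q - z - γ)|² dz`. -/
theorem ltft_frame_operator_middle
    (f : ℝ → ℂ) (hf : Integrable f)
    (γ ξ b₀ b₁ ω : ℝ) (hγ : 0 < γ) (hξ : 0 < ξ)
    (h0 : 0 < b₀) (h01 : b₀ < b₁) (hω : 0 < ω) :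
    ∫ c in (0 : ℝ)..1, ∫ b in b₀..b₁,
        ‖(Real.sqrt (γ / b) : ℂ) * 𝓕 f ((γ / b) * (ω - (ξ * c / γ + 1) * b))‖ ^ 2 =
      ∫ q in (γ * ω / b₁)..(γ * ω / b₀),
        (1 / q) * ((γ / ξ) * ∫ z in (0 : ℝ)..ξ, ‖𝓕 f (q - z - γ)‖ ^ 2) := by
  have hb₁ : 0 < b₁ := h0.trans h01
  have hFc : Continuous (𝓕 f) :=
    VectorFourier.fourierIntegral_continuous Real.continuous_fourierChar
      (by exact continuous_inner) hf
  have hGc : Continuous fun x : ℝ => ‖𝓕 f x‖ ^ 2 := (hFc.norm.pow 2)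
  set A : ℝ := γ * ω / b₁ with hAdef
  set B : ℝ := γ * ω / b₀ with hBdef
  have hA : 0 < A := by positivity
  have hB : 0 < B := by positivity
  have hAB : A ≤ B := by
    apply div_le_div_of_nonneg_left (by positivity) h0 h01.le
  -- Step 1 & 2: inner integral over b equals integral over q
  have step12 : ∀ c : ℝ,
      (∫ b in b₀..b₁,
        ‖(Real.sqrt (γ / b) : ℂ) * 𝓕 f ((γ / b) * (ω - (ξ * c / γ + 1) * b))‖ ^ 2)
      = ∫ q in A..B, (γ / q) * ‖𝓕 f (q - ξ * c - γ)‖ ^ 2 := by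
    intro c
    have step1 : (∫ b in b₀..b₁,
        ‖(Real.sqrt (γ / b) : ℂ) * 𝓕 f ((γ / b) * (ω - (ξ * c / γ + 1) * b))‖ ^ 2)
        = ∫ b in b₀..b₁,
            -((-(γ * ω / b ^ 2)) • (((fun q => (γ / q) * ‖𝓕 f (q - ξ * c - γ)‖ ^ 2)
              ∘ (fun b => γ * ω / b)) b)) := by
      apply intervalIntegral.integral_congr
      intro b hb
      rw [Set.uIcc_of_le h01.le] at hb
      have hbpos : 0 < b := lt_of_lt_of_le h0 hb.1
      have harg : γ / b * (ω - (ξ * c / γ + 1) * b) = γ * ω / b - ξ * c - γ := by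
        field_simp
        ring
      simp only [Function.comp_apply, smul_eq_mul, harg, neg_mul, neg_neg]
      rw [norm_mul, mul_pow]
      have hnr : ‖(Real.sqrt (γ / b) : ℂ)‖ ^ 2 = γ / b := by
        rw [Complex.norm_real, Real.norm_eq_abs, _root_.abs_of_nonneg (Real.sqrt_nonneg _),
          Real.sq_sqrt (by positivity)]
      rw [hnr]
      have h2 : γ / (γ * ω / b) = b / ω := by
        rw [div_div_eq_mul_div, mul_div_mul_left _ _ hγ.ne']
      rw [h2]
      field_simp
    rw [step1, intervalIntegral.integral_neg]
    have hderiv : ∀ x ∈ Set.uIcc b₀ b₁,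
        HasDerivAt (fun b => γ * ω / b) (-(γ * ω / x ^ 2)) x := by
      intro x hx
      rw [Set.uIcc_of_le h01.le] at hx
      have hxpos : 0 < x := lt_of_lt_of_le h0 hx.1
      simpa only [div_eq_mul_inv, mul_neg] using
        (hasDerivAt_inv hxpos.ne').const_mul (γ * ω)
    have hc' : ContinuousOn (fun x => -(γ * ω / x ^ 2)) (Set.uIcc b₀ b₁) := by
      intro x hx
      rw [Set.uIcc_of_le h01.le] at hx
      have hxpos : 0 < x := lt_of_lt_of_le h0 hx.1
      exact (((continuousAt_const.div ((continuous_pow 2).continuousAt)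
        (by positivity))).neg).continuousWithinAt
    have hg : ContinuousOn (fun q => (γ / q) * ‖𝓕 f (q - ξ * c - γ)‖ ^ 2)
        ((fun b => γ * ω / b) '' Set.uIcc b₀ b₁) := by
      apply ContinuousOn.mono (s := {q : ℝ | q ≠ 0})
      · exact (continuousOn_const.div continuousOn_id fun x hx => hx).mul
          (hGc.comp (by continuity)).continuousOn
      · rintro q ⟨b, hb, rfl⟩
        rw [Set.uIcc_of_le h01.le] at hb
        have hbpos : 0 < b := lt_of_lt_of_le h0 hb.1
        have : 0 < γ * ω / b := by positivity
        exact this.ne'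
    rw [intervalIntegral.integral_comp_smul_deriv' hderiv hc' hg]
    rw [intervalIntegral.integral_symm A B, neg_neg]
  simp only [step12]
  -- Step 3: Fubini
  have swap : (∫ c in (0:ℝ)..1, ∫ q in A..B, (γ / q) * ‖𝓕 f (q - ξ * c - γ)‖ ^ 2)
      = ∫ q in A..B, ∫ c in (0:ℝ)..1, (γ / q) * ‖𝓕 f (q - ξ * c - γ)‖ ^ 2 := by
    simp_rw [intervalIntegral.integral_of_le hAB,
      intervalIntegral.integral_of_le (by norm_num : (0:ℝ) ≤ 1)]
    apply MeasureTheory.integral_integral_swap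
    have hint : IntegrableOn
        (fun p : ℝ × ℝ => (γ / p.2) * ‖𝓕 f (p.2 - ξ * p.1 - γ)‖ ^ 2)
        (Set.Icc (0:ℝ) 1 ×ˢ Set.Icc A B) (volume.prod volume) := by
      apply ContinuousOn.integrableOn_compact (IsCompact.prod isCompact_Icc isCompact_Icc)
      apply ContinuousOn.mul
      · exact continuousOn_const.div continuous_snd.continuousOn
          (fun p hp => (lt_of_lt_of_le hA hp.2.1).ne')
      · exact (hGc.comp (by continuity)).continuousOn
    have hmono : IntegrableOn
        (fun p : ℝ × ℝ => (γ / p.2) * ‖𝓕 f (p.2 - ξ * p.1 - γ)‖ ^ 2)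
        (Set.Ioc (0:ℝ) 1 ×ˢ Set.Ioc A B) (volume.prod volume) :=
      hint.mono_set (Set.prod_mono Set.Ioc_subset_Icc_self Set.Ioc_subset_Icc_self)
    rw [Measure.prod_restrict]
    exact hmono
  rw [swap]
  -- Step 4: inner c-integral
  apply intervalIntegral.integral_congr
  intro q hq
  dsimp only
  rw [intervalIntegral.integral_const_mul]
  have hsub : (∫ c in (0:ℝ)..1, ‖𝓕 f (q - ξ * c - γ)‖ ^ 2)
      = ξ⁻¹ * ∫ z in (0:ℝ)..ξ, ‖𝓕 f (q - z - γ)‖ ^ 2 := by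
    have h := intervalIntegral.integral_comp_mul_left
      (a := (0:ℝ)) (b := 1) (fun z => ‖𝓕 f (q - z - γ)‖ ^ 2) hξ.ne'
    simp only [mul_zero, mul_one, smul_eq_mul] at h
    exact h
  rw [hsub]
  ring
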